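/- arXiv:math/0403016 — 2 statements merged into one kernel-verified Lean document; each statement's English description precedes it below -/
import Mathlib

section
/- (Lemma 2.2) Let (X_t)_{t≥0} satisfy (cov) and (LR), suppose that 1, X_t, X_t² are linearly independent for all t > 0, and suppose condition (QV) holds with D(s,t,u) ≠ 0 for all 0 ≤ s < t < u. Then for every 0 ≤ s < t < u one has b(s,t,u) − C(s,t,u) ≠ 0 (where b is the coefficient from (LR) and C from (QV)), for every 0 ≤ t < u the conditional expectation E(X_u² | F_{≤t}) is almost surely equal to a quadratic polynomial in X_t with deterministic coefficients, and moreover for all 0 ≤ s < t < u, almost surely E(X_u² − u | F_{≤s}) = (1 + (A+B+C−1)/(b−C))·(X_s² − s) + ((α+β)/(b−C))·X_s, where all coefficients are evaluated at (s,t,u). -/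
/-!
Testing (LR) against `X s` and `X u` with the covariance gives `a s + b u = t` and
`(a + b) X_s = X_s`, hence `E(X_t | 𝓕≤s) - X_s = b (E(X_u | 𝓕≤s) - X_s)` with
`b = (t - s) / (u - s)`. The right side has second moment at most `(t - s)² / (u - s)`, which tends
to `0` as `u → ∞`, so `X` is a martingale.

Conditioning `X_t X_u` on `𝓕≤s` through `𝓕≤s ∨ 𝓕≥u` (using (LR)) and through `𝓕≤t` (using the
martingale property), and conditioning `X_t²` on `𝓕≤s` through (QV), gives
`(b - C) E(X_u² | 𝓕≤s) = (A + B - a) X_s² + (α + β) X_s + D`.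
If `b = C`, the linear independence of `1, X_s, X_s²` (or `X_0 = 0`) forces `D = 0`. Otherwise this
is a quadratic formula for `E(X_u² | 𝓕≤s)`, and the expectation of (QV),
`t = (A + B) s + C u + D`, turns it into the stated one.
-/

open MeasureTheory

noncomputable section

/-- The σ-field generated by the process `X` on the time interval `[0, s]`. -/
def sigmaLE {Ω : Type*} [MeasurableSpace Ω] {E : Type*} [MeasurableSpace E]
    (X : ℝ → Ω → E) (s : ℝ) : MeasurableSpace Ω :=
  ⨆ r ∈ Set.Icc (0:ℝ) s, MeasurableSpace.comap (X r) inferInstance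

/-- The σ-field generated by the process `X` on the time interval `[u, ∞)`. -/
def sigmaGE {Ω : Type*} [MeasurableSpace Ω] {E : Type*} [MeasurableSpace E]
    (X : ℝ → Ω → E) (u : ℝ) : MeasurableSpace Ω :=
  ⨆ r ∈ Set.Ici u, MeasurableSpace.comap (X r) inferInstance

/-- The conditional variance `Var(f | m) = E(f² | m) − (E(f | m))²`. -/
def condVar {Ω : Type*} [MeasurableSpace Ω] (μ : Measure Ω) (m : MeasurableSpace Ω)
    (f : Ω → ℝ) : Ω → ℝ :=
  fun ω => (μ[fun ω' => (f ω') ^ 2 | m]) ω - ((μ[f | m]) ω) ^ 2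

/-- `1, f, f²` are linearly independent: no nontrivial real linear combination of them
vanishes almost surely. -/
def LinIndep123 {Ω : Type*} [MeasurableSpace Ω] (μ : Measure Ω) (f : Ω → ℝ) : Prop :=
  ∀ c₀ c₁ c₂ : ℝ, (fun ω => c₀ + c₁ * f ω + c₂ * (f ω) ^ 2) =ᵐ[μ] (fun _ => 0) →
    c₀ = 0 ∧ c₁ = 0 ∧ c₂ = 0

open Filter Topology

theorem nonpos_of_forall_le_div {I c s t : ℝ} (h : ∀ v, t < v → I ≤ c / (v - s)) : I ≤ 0 := by
  have hlim : Tendsto (fun v => c / (v - s)) atTop (𝓝 0) :=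
    tendsto_const_nhds.div_atTop (tendsto_atTop_add_const_right _ (-s) tendsto_id)
  exact ge_of_tendsto hlim ((eventually_gt_atTop t).mono h)

section CondExp

variable {Ω : Type*} {m m₁ m₂ m0 : MeasurableSpace Ω} {μ : Measure Ω} {f g : Ω → ℝ}

theorem integral_condExp_mul (hm : m ≤ m0) [SigmaFinite (μ.trim hm)]
    (hf : StronglyMeasurable[m] f) (hgf : Integrable (g * f) μ) (hg : Integrable g μ) :
    ∫ ω, g ω * f ω ∂μ = ∫ ω, μ[g|m] ω * f ω ∂μ := by
  rw [← integral_condExp hm]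
  exact integral_congr_ae (condExp_mul_of_stronglyMeasurable_right hf hgf hg)

theorem condExp_mul_condExp_of_le (hm₁₂ : m₁ ≤ m₂) (hm₂ : m₂ ≤ m0) [SigmaFinite (μ.trim hm₂)]
    (hf : StronglyMeasurable[m₂] f) (hfg : Integrable (f * g) μ) (hg : Integrable g μ) :
    μ[f * g|m₁] =ᵐ[μ] μ[f * μ[g|m₂]|m₁] :=
  (condExp_condExp_of_le hm₁₂ hm₂).symm.trans
    (condExp_congr_ae (condExp_mul_of_stronglyMeasurable_left hf hfg hg))

theorem integral_sq_condExp_le (hf : MemLp f 2 μ) :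
    ∫ ω, μ[f|m] ω ^ 2 ∂μ ≤ ∫ ω, f ω ^ 2 ∂μ := by
  have := integral_norm_condExp_rpow_le (m := m) (μ := μ) (p := 2) one_le_two (f := f)
    (by simpa [Real.norm_eq_abs, sq_abs] using hf.integrable_sq)
  simpa [Real.norm_eq_abs, sq_abs] using this

theorem condExp_sub_const (hm : m ≤ m0) [IsFiniteMeasure μ] (hf : Integrable f μ) (c : ℝ) :
    μ[fun ω => f ω - c|m] =ᵐ[μ] fun ω => μ[f|m] ω - c := by
  refine (condExp_sub hf (integrable_const c) m).trans ?_
  filter_upwards with ω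
  rw [Pi.sub_apply, condExp_const hm]

end CondExp

section SigmaAlgebras

variable {Ω E : Type*} [mΩ : MeasurableSpace Ω] [MeasurableSpace E] {X : ℝ → Ω → E}

theorem sigmaLE_le (hX : ∀ t, Measurable (X t)) (s : ℝ) : sigmaLE X s ≤ mΩ :=
  iSup₂_le fun r _ => (hX r).comap_le

theorem sigmaGE_le (hX : ∀ t, Measurable (X t)) (u : ℝ) : sigmaGE X u ≤ mΩ :=
  iSup₂_le fun r _ => (hX r).comap_le

theorem sigmaLE_mono {s t : ℝ} (hst : s ≤ t) : sigmaLE X s ≤ sigmaLE X t :=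
  iSup₂_le fun r hr => le_iSup₂ (f := fun r (_ : r ∈ Set.Icc 0 t) =>
    MeasurableSpace.comap (X r) inferInstance) r (Set.Icc_subset_Icc_right hst hr)

theorem measurable_sigmaLE {s : ℝ} (hs : 0 ≤ s) : Measurable[sigmaLE X s] (X s) :=
  Measurable.of_comap_le <| le_iSup₂ (f := fun r (_ : r ∈ Set.Icc 0 s) =>
    MeasurableSpace.comap (X r) inferInstance) s ⟨hs, le_rfl⟩

theorem measurable_sigmaGE (u : ℝ) : Measurable[sigmaGE X u] (X u) :=
  Measurable.of_comap_le <| le_iSup₂ (f := fun r (_ : r ∈ Set.Ici u) =>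
    MeasurableSpace.comap (X r) inferInstance) u (Set.mem_Ici.2 le_rfl)

end SigmaAlgebras

/-- The covariance `E(X_t X_s) = min t s` and condition (LR), for a square-integrable process
started at `0`. -/
structure IsCovLRProcess {Ω : Type*} [MeasurableSpace Ω] (μ : Measure Ω) (X : ℝ → Ω → ℝ)
    (a b : ℝ → ℝ → ℝ → ℝ) : Prop where
  measurable : ∀ t, Measurable (X t)
  memLp : ∀ t, 0 ≤ t → MemLp (X t) 2 μ
  zero : ∀ ω, X 0 ω = 0
  cov : ∀ s t : ℝ, 0 ≤ s → 0 ≤ t → ∫ ω, X t ω * X s ω ∂μ = min t s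
  lr : ∀ s t u : ℝ, 0 ≤ s → s < t → t < u →
    μ[X t | sigmaLE X s ⊔ sigmaGE X u] =ᵐ[μ] fun ω => a s t u * X s ω + b s t u * X u ω

namespace IsCovLRProcess

variable {Ω : Type*} [MeasurableSpace Ω] {μ : Measure Ω} {X : ℝ → Ω → ℝ}
  {a b : ℝ → ℝ → ℝ → ℝ} {s t u A B C D α β : ℝ}

theorem integrable_mul (hX : IsCovLRProcess μ X a b) (hs : 0 ≤ s) (ht : 0 ≤ t) :
    Integrable (fun ω => X t ω * X s ω) μ :=
  (hX.memLp t ht).integrable_mul (hX.memLp s hs)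

theorem integrable_sq (hX : IsCovLRProcess μ X a b) (ht : 0 ≤ t) :
    Integrable (fun ω => X t ω ^ 2) μ :=
  (hX.memLp t ht).integrable_sq

theorem integral_sq (hX : IsCovLRProcess μ X a b) (ht : 0 ≤ t) : ∫ ω, X t ω ^ 2 ∂μ = t := by
  simpa [sq] using hX.cov t t ht ht

theorem integral_sq_sub (hX : IsCovLRProcess μ X a b) (hs : 0 ≤ s) (hsu : s ≤ u) :
    ∫ ω, (X u ω - X s ω) ^ 2 ∂μ = u - s := by
  have hu := hs.trans hsu
  have h : ∀ ω, (X u ω - X s ω) ^ 2 = X u ω ^ 2 - 2 * (X u ω * X s ω) + X s ω ^ 2 :=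
    fun ω => by ring
  simp_rw [h]
  rw [integral_add (f := fun ω => X u ω ^ 2 - 2 * (X u ω * X s ω))
      ((hX.integrable_sq hu).sub ((hX.integrable_mul hs hu).const_mul 2)) (hX.integrable_sq hs),
    integral_sub (hX.integrable_sq hu) ((hX.integrable_mul hs hu).const_mul 2),
    integral_const_mul, hX.integral_sq hu,
    hX.integral_sq hs, hX.cov s u hs hu, min_eq_right hsu]
  ring

section FiniteMeasure

variable [IsFiniteMeasure μ]

theorem integrable (hX : IsCovLRProcess μ X a b) (ht : 0 ≤ t) :
    Integrable (X t) μ :=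
  (hX.memLp t ht).integrable one_le_two

theorem a_mul_add_b_mul (hX : IsCovLRProcess μ X a b) (hs : 0 ≤ s) (hst : s < t)
    (htu : t < u) : a s t u * s + b s t u * s = s ∧ a s t u * s + b s t u * u = t := by
  have ht := hs.trans hst.le
  have hu := ht.trans htu.le
  have hG := sup_le (sigmaLE_le hX.measurable s) (sigmaGE_le hX.measurable u)
  have test : ∀ r, 0 ≤ r → StronglyMeasurable[sigmaLE X s ⊔ sigmaGE X u] (X r) →
      ∫ ω, X t ω * X r ω ∂μ =
        a s t u * ∫ ω, X s ω * X r ω ∂μ + b s t u * ∫ ω, X u ω * X r ω ∂μ := by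
    intro r hr hmr
    rw [integral_condExp_mul hG hmr (hX.integrable_mul hr ht) (hX.integrable ht),
      ← integral_const_mul, ← integral_const_mul, ← integral_add]
    · refine integral_congr_ae ?_
      filter_upwards [hX.lr s t u hs hst htu] with ω hω
      rw [hω]
      ring
    · exact (hX.integrable_mul hr hs).const_mul _
    · exact (hX.integrable_mul hr hu).const_mul _
  have h₁ := test s hs ((measurable_sigmaLE hs).stronglyMeasurable.mono le_sup_left)
  have h₂ := test u hu ((measurable_sigmaGE u).stronglyMeasurable.mono le_sup_right)
  rw [hX.cov s t hs ht, hX.cov s s hs hs, hX.cov s u hs hu, min_eq_right hst.le, min_self,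
    min_eq_right (hst.trans htu).le] at h₁
  rw [hX.cov u t hu ht, hX.cov u s hu hs, hX.cov u u hu hu, min_eq_left htu.le,
    min_eq_left (hst.trans htu).le, min_self] at h₂
  exact ⟨h₁.symm, h₂.symm⟩

theorem a_mul_add_b_mul_X (hX : IsCovLRProcess μ X a b) (hs : 0 ≤ s) (hst : s < t)
    (htu : t < u) (ω : Ω) : a s t u * X s ω + b s t u * X s ω = X s ω := by
  obtain ⟨h, -⟩ := hX.a_mul_add_b_mul hs hst htu
  rcases eq_or_ne s 0 with rfl | hs₀
  · simp [hX.zero]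
  · have hab : a s t u + b s t u = 1 := mul_right_cancel₀ hs₀ (by linarith)
    linear_combination X s ω * hab

theorem b_mul_sub (hX : IsCovLRProcess μ X a b) (hs : 0 ≤ s) (hst : s < t) (htu : t < u) :
    b s t u * (u - s) = t - s := by
  obtain ⟨h₁, h₂⟩ := hX.a_mul_add_b_mul hs hst htu
  linarith

theorem condExp_sigmaLE_of_lr (hX : IsCovLRProcess μ X a b) (hs : 0 ≤ s) (hst : s < t)
    (htu : t < u) :
    μ[X t|sigmaLE X s] =ᵐ[μ] fun ω => a s t u * X s ω + b s t u * μ[X u|sigmaLE X s] ω := by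
  have hF := sigmaLE_le hX.measurable s
  have hG := sup_le hF (sigmaGE_le hX.measurable u)
  have hu := hs.trans (hst.trans htu).le
  calc μ[X t|sigmaLE X s]
      =ᵐ[μ] μ[μ[X t|sigmaLE X s ⊔ sigmaGE X u]|sigmaLE X s] :=
        (condExp_condExp_of_le le_sup_left hG).symm
    _ =ᵐ[μ] μ[a s t u • X s + b s t u • X u|sigmaLE X s] :=
        condExp_congr_ae (hX.lr s t u hs hst htu)
    _ =ᵐ[μ] μ[a s t u • X s|sigmaLE X s] + μ[b s t u • X u|sigmaLE X s] :=
        condExp_add ((hX.integrable hs).smul _) ((hX.integrable hu).smul _) _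
    _ =ᵐ[μ] a s t u • X s + b s t u • μ[X u|sigmaLE X s] := by
        refine (condExp_smul _ _ _).add (condExp_smul _ _ _) |>.trans ?_
        rw [condExp_of_stronglyMeasurable hF (measurable_sigmaLE hs).stronglyMeasurable
          (hX.integrable hs)]

theorem condExp_sub_ae_eq_mul (hX : IsCovLRProcess μ X a b) (hs : 0 ≤ s) (hst : s < t)
    (htu : t < u) :
    (fun ω => μ[X t|sigmaLE X s] ω - X s ω) =ᵐ[μ]
      fun ω => b s t u * (μ[X u|sigmaLE X s] ω - X s ω) := by
  filter_upwards [hX.condExp_sigmaLE_of_lr hs hst htu] with ω h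
  rw [h]
  linear_combination hX.a_mul_add_b_mul_X hs hst htu ω

theorem integral_sq_condExp_sub_le (hX : IsCovLRProcess μ X a b) (hs : 0 ≤ s) (hsu : s ≤ u) :
    ∫ ω, (μ[X u|sigmaLE X s] ω - X s ω) ^ 2 ∂μ ≤ u - s := by
  have hF := sigmaLE_le hX.measurable s
  have hu := hs.trans hsu
  have h : (fun ω => μ[X u|sigmaLE X s] ω - X s ω) =ᵐ[μ] μ[X u - X s|sigmaLE X s] := by
    filter_upwards [condExp_sub (hX.integrable hu) (hX.integrable hs) (sigmaLE X s)] with ω hω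
    rw [hω, Pi.sub_apply, condExp_of_stronglyMeasurable hF
      (measurable_sigmaLE hs).stronglyMeasurable (hX.integrable hs)]
  calc ∫ ω, (μ[X u|sigmaLE X s] ω - X s ω) ^ 2 ∂μ
      = ∫ ω, μ[X u - X s|sigmaLE X s] ω ^ 2 ∂μ := integral_congr_ae (h.fun_comp (· ^ 2))
    _ ≤ ∫ ω, (X u ω - X s ω) ^ 2 ∂μ :=
        integral_sq_condExp_le ((hX.memLp u hu).sub (hX.memLp s hs))
    _ = u - s := hX.integral_sq_sub hs hsu

theorem condExp_sigmaLE (hX : IsCovLRProcess μ X a b) (hs : 0 ≤ s) (hst : s < t) :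
    μ[X t|sigmaLE X s] =ᵐ[μ] X s := by
  have ht := hs.trans hst.le
  have hbound : ∀ u, t < u →
      ∫ ω, (μ[X t|sigmaLE X s] ω - X s ω) ^ 2 ∂μ ≤ (t - s) ^ 2 / (u - s) := by
    intro u htu
    have hus : 0 < u - s := by linarith
    calc ∫ ω, (μ[X t|sigmaLE X s] ω - X s ω) ^ 2 ∂μ
        = ∫ ω, b s t u ^ 2 * (μ[X u|sigmaLE X s] ω - X s ω) ^ 2 ∂μ :=
          integral_congr_ae <| by
            filter_upwards [hX.condExp_sub_ae_eq_mul hs hst htu] with ω h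
            rw [h, mul_pow]
      _ = b s t u ^ 2 * ∫ ω, (μ[X u|sigmaLE X s] ω - X s ω) ^ 2 ∂μ := integral_const_mul _ _
      _ ≤ b s t u ^ 2 * (u - s) :=
          mul_le_mul_of_nonneg_left (hX.integral_sq_condExp_sub_le hs (hst.trans htu).le)
            (sq_nonneg _)
      _ = (t - s) ^ 2 / (u - s) := by
          rw [← hX.b_mul_sub hs hst htu]
          field_simp
  have hzero : ∫ ω, (μ[X t|sigmaLE X s] ω - X s ω) ^ 2 ∂μ = 0 :=
    le_antisymm (nonpos_of_forall_le_div hbound) (integral_nonneg fun _ => sq_nonneg _)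
  have hint := (((hX.memLp t ht).condExp (m := sigmaLE X s) one_le_two).sub
    (hX.memLp s hs)).integrable_sq
  filter_upwards [(integral_eq_zero_iff_of_nonneg (fun _ => sq_nonneg _) hint).1 hzero]
    with ω hω
  exact sub_eq_zero.1 (pow_eq_zero_iff two_ne_zero |>.1 hω)

theorem integral_eq_zero (hX : IsCovLRProcess μ X a b) (ht : 0 ≤ t) : ∫ ω, X t ω ∂μ = 0 := by
  rcases ht.eq_or_lt with rfl | ht
  · simp [hX.zero]
  · rw [← integral_condExp (sigmaLE_le hX.measurable 0),
      integral_congr_ae (hX.condExp_sigmaLE le_rfl ht)]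
    simp [hX.zero]

theorem condExp_add_mul_add_mul_sq (hX : IsCovLRProcess μ X a b) (hs : 0 ≤ s) (hsu : s < u)
    {f g : Ω → ℝ} (hf : StronglyMeasurable[sigmaLE X s] f) (hfi : Integrable f μ)
    (hg : StronglyMeasurable[sigmaLE X s] g) (hgi : Integrable (g * X u) μ) (c : ℝ) :
    μ[fun ω => f ω + g ω * X u ω + c * X u ω ^ 2|sigmaLE X s] =ᵐ[μ]
      fun ω => f ω + g ω * X s ω + c * μ[fun ω => X u ω ^ 2|sigmaLE X s] ω := by
  have hF := sigmaLE_le hX.measurable s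
  have hu := hs.trans hsu.le
  have hmart : μ[g * X u|sigmaLE X s] =ᵐ[μ] g * X s :=
    (condExp_mul_of_stronglyMeasurable_left hg hgi (hX.integrable hu)).trans
      (EventuallyEq.rfl.mul (hX.condExp_sigmaLE hs hsu))
  refine (condExp_add (hfi.add hgi) ((hX.integrable_sq hu).const_mul c) _).trans ?_
  filter_upwards [condExp_add hfi hgi (sigmaLE X s), hmart,
    condExp_smul c (fun ω => X u ω ^ 2) (sigmaLE X s)] with ω h₁ h₂ h₃
  simp only [Pi.add_apply] at h₁ ⊢
  rw [h₁, h₂, condExp_of_stronglyMeasurable hF hf hfi]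
  exact congrArg _ h₃

theorem condExp_mul_sigmaLE_of_lr (hX : IsCovLRProcess μ X a b) (hs : 0 ≤ s) (hst : s < t)
    (htu : t < u) :
    μ[X t * X u|sigmaLE X s] =ᵐ[μ]
      fun ω => a s t u * X s ω ^ 2 + b s t u * μ[fun ω => X u ω ^ 2|sigmaLE X s] ω := by
  have hG := sup_le (sigmaLE_le hX.measurable s) (sigmaGE_le hX.measurable u)
  have ht := hs.trans hst.le
  have hu := ht.trans htu.le
  calc μ[X t * X u|sigmaLE X s]
      = μ[X u * X t|sigmaLE X s] := by rw [mul_comm]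
    _ =ᵐ[μ] μ[X u * μ[X t|sigmaLE X s ⊔ sigmaGE X u]|sigmaLE X s] :=
        condExp_mul_condExp_of_le le_sup_left hG
          ((measurable_sigmaGE u).stronglyMeasurable.mono le_sup_right)
          (hX.integrable_mul ht hu) (hX.integrable ht)
    _ =ᵐ[μ] μ[fun ω => 0 + a s t u * X s ω * X u ω + b s t u * X u ω ^ 2|sigmaLE X s] := by
        refine condExp_congr_ae ?_
        filter_upwards [hX.lr s t u hs hst htu] with ω h
        rw [Pi.mul_apply, h]
        ring
    _ =ᵐ[μ] fun ω => 0 + a s t u * X s ω * X s ω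
          + b s t u * μ[fun ω => X u ω ^ 2|sigmaLE X s] ω :=
        hX.condExp_add_mul_add_mul_sq hs (hst.trans htu) stronglyMeasurable_const
          (integrable_const 0) ((measurable_sigmaLE hs).stronglyMeasurable.const_mul _)
          (((hX.memLp s hs).const_mul _).integrable_mul (hX.memLp u hu)) _
    _ = _ := by ext ω; ring

theorem condExp_mul_sigmaLE_eq_condExp_sq (hX : IsCovLRProcess μ X a b) (hs : 0 ≤ s)
    (hst : s < t) (htu : t < u) :
    μ[X t * X u|sigmaLE X s] =ᵐ[μ] μ[fun ω => X t ω ^ 2|sigmaLE X s] := by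
  have ht := hs.trans hst.le
  refine (condExp_mul_condExp_of_le (sigmaLE_mono hst.le) (sigmaLE_le hX.measurable t)
    (measurable_sigmaLE ht).stronglyMeasurable (hX.integrable_mul (ht.trans htu.le) ht)
    (hX.integrable (ht.trans htu.le))).trans (condExp_congr_ae ?_)
  filter_upwards [hX.condExp_sigmaLE ht htu] with ω h
  rw [Pi.mul_apply, h, sq]

theorem condExp_sq_sigmaLE_of_qv (hX : IsCovLRProcess μ X a b)
    (hQV : μ[fun ω => X t ω ^ 2|sigmaLE X s ⊔ sigmaGE X u] =ᵐ[μ]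
      fun ω => A * X s ω ^ 2 + B * X s ω * X u ω + C * X u ω ^ 2 + D + α * X s ω + β * X u ω)
    (hs : 0 ≤ s) (hst : s < t) (htu : t < u) :
    μ[fun ω => X t ω ^ 2|sigmaLE X s] =ᵐ[μ]
      fun ω => (A + B) * X s ω ^ 2 + (α + β) * X s ω + D
        + C * μ[fun ω => X u ω ^ 2|sigmaLE X s] ω := by
  have hG := sup_le (sigmaLE_le hX.measurable s) (sigmaGE_le hX.measurable u)
  have hu := hs.trans (hst.trans htu).le
  have hXs := measurable_sigmaLE (X := X) hs
  calc μ[fun ω => X t ω ^ 2|sigmaLE X s]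
      =ᵐ[μ] μ[μ[fun ω => X t ω ^ 2|sigmaLE X s ⊔ sigmaGE X u]|sigmaLE X s] :=
        (condExp_condExp_of_le le_sup_left hG).symm
    _ =ᵐ[μ] μ[fun ω => (A * X s ω ^ 2 + α * X s ω + D) + (B * X s ω + β) * X u ω
          + C * X u ω ^ 2|sigmaLE X s] :=
        condExp_congr_ae (hQV.trans (ae_of_all _ fun ω => by ring))
    _ =ᵐ[μ] fun ω => (A * X s ω ^ 2 + α * X s ω + D) + (B * X s ω + β) * X s ω
          + C * μ[fun ω => X u ω ^ 2|sigmaLE X s] ω :=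
        hX.condExp_add_mul_add_mul_sq hs (hst.trans htu) (by fun_prop)
          ((((hX.integrable_sq hs).const_mul A).add ((hX.integrable hs).const_mul α)).add
            (integrable_const D))
          (by fun_prop)
          ((((hX.memLp s hs).const_mul B).add (memLp_const β)).integrable_mul (hX.memLp u hu)) C
    _ = _ := by ext ω; ring

theorem sub_mul_condExp_sq_ae_eq (hX : IsCovLRProcess μ X a b)
    (hQV : μ[fun ω => X t ω ^ 2|sigmaLE X s ⊔ sigmaGE X u] =ᵐ[μ]
      fun ω => A * X s ω ^ 2 + B * X s ω * X u ω + C * X u ω ^ 2 + D + α * X s ω + β * X u ω)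
    (hs : 0 ≤ s) (hst : s < t) (htu : t < u) :
    (fun ω => (b s t u - C) * μ[fun ω => X u ω ^ 2|sigmaLE X s] ω) =ᵐ[μ]
      fun ω => (A + B - a s t u) * X s ω ^ 2 + (α + β) * X s ω + D := by
  filter_upwards [hX.condExp_mul_sigmaLE_of_lr hs hst htu,
    hX.condExp_mul_sigmaLE_eq_condExp_sq hs hst htu,
    hX.condExp_sq_sigmaLE_of_qv hQV hs hst htu] with ω h₁ h₂ h₃
  linear_combination h₂ - h₁ + h₃

end FiniteMeasure

theorem qv_coeff_eq [IsProbabilityMeasure μ] (hX : IsCovLRProcess μ X a b)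
    (hQV : μ[fun ω => X t ω ^ 2|sigmaLE X s ⊔ sigmaGE X u] =ᵐ[μ]
      fun ω => A * X s ω ^ 2 + B * X s ω * X u ω + C * X u ω ^ 2 + D + α * X s ω + β * X u ω)
    (hs : 0 ≤ s) (hst : s < t) (htu : t < u) :
    (A + B) * s + C * u + D = t := by
  have hF := sigmaLE_le hX.measurable s
  have ht := hs.trans hst.le
  have hu := ht.trans htu.le
  calc (A + B) * s + C * u + D
      = ∫ ω, (A + B) * X s ω ^ 2 + (α + β) * X s ω + D
          + C * μ[fun ω => X u ω ^ 2|sigmaLE X s] ω ∂μ := by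
        have h₁ := (hX.integrable_sq hs).const_mul (A + B)
        have h₂ := (hX.integrable hs).const_mul (α + β)
        rw [integral_add ((h₁.fun_add h₂).fun_add (integrable_const D))
            (integrable_condExp.const_mul _), integral_add (h₁.fun_add h₂) (integrable_const D),
          integral_add h₁ h₂,
          integral_const_mul, integral_const_mul, integral_const_mul, integral_condExp hF,
          hX.integral_sq hs, hX.integral_sq hu, hX.integral_eq_zero hs]
        simp only [mul_zero, add_zero, integral_const, probReal_univ, smul_eq_mul, one_mul]
        ring
    _ = ∫ ω, μ[fun ω => X t ω ^ 2|sigmaLE X s] ω ∂μ :=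
        integral_congr_ae (hX.condExp_sq_sigmaLE_of_qv hQV hs hst htu).symm
    _ = t := by rw [integral_condExp hF, hX.integral_sq ht]

theorem condExp_sq_sub_sigmaLE [IsProbabilityMeasure μ] (hX : IsCovLRProcess μ X a b)
    (hQV : μ[fun ω => X t ω ^ 2|sigmaLE X s ⊔ sigmaGE X u] =ᵐ[μ]
      fun ω => A * X s ω ^ 2 + B * X s ω * X u ω + C * X u ω ^ 2 + D + α * X s ω + β * X u ω)
    (hs : 0 ≤ s) (hst : s < t) (htu : t < u) (hbC : b s t u - C ≠ 0) :
    μ[fun ω => X u ω ^ 2 - u|sigmaLE X s] =ᵐ[μ]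
      fun ω => (1 + (A + B + C - 1) / (b s t u - C)) * (X s ω ^ 2 - s)
        + (α + β) / (b s t u - C) * X s ω := by
  obtain ⟨h₁, h₂⟩ := hX.a_mul_add_b_mul hs hst htu
  filter_upwards [condExp_sub_const (sigmaLE_le hX.measurable s)
      (hX.integrable_sq (hs.trans (hst.trans htu).le)) u,
    hX.sub_mul_condExp_sq_ae_eq hQV hs hst htu] with ω hsub hkey
  rw [hsub]
  field_simp
  linear_combination hkey + hX.qv_coeff_eq hQV hs hst htu + h₁ - h₂
    - X s ω * hX.a_mul_add_b_mul_X hs hst htu ω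

end IsCovLRProcess

theorem eq_zero_of_quadratic_ae_eq_zero {Ω : Type*} [MeasurableSpace Ω] {μ : Measure Ω}
    [NeZero μ] {X : ℝ → Ω → ℝ} (hX0 : ∀ ω, X 0 ω = 0)
    (hindep : ∀ t, 0 < t → LinIndep123 μ (X t))
    {s c₀ c₁ c₂ : ℝ} (hs : 0 ≤ s)
    (h : (fun ω => c₀ + c₁ * X s ω + c₂ * X s ω ^ 2) =ᵐ[μ] fun _ => 0) : c₀ = 0 := by
  rcases hs.eq_or_lt with rfl | hs
  · obtain ⟨ω, hω⟩ := h.exists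
    simpa [hX0] using hω
  · exact (hindep s hs _ _ _ h).1

theorem stmt2_general {Ω : Type*} [MeasurableSpace Ω] (μ : Measure Ω) [IsProbabilityMeasure μ]
    (X : ℝ → Ω → ℝ) (hmeas : ∀ t, Measurable (X t))
    (hL2 : ∀ t, 0 ≤ t → MemLp (X t) 2 μ)
    (hX0 : ∀ ω, X 0 ω = 0)
    (hcov : ∀ s t : ℝ, 0 ≤ s → 0 ≤ t → ∫ ω, X t ω * X s ω ∂μ = min t s)
    (a b : ℝ → ℝ → ℝ → ℝ)
    (hLR : ∀ s t u : ℝ, 0 ≤ s → s < t → t < u →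
      μ[X t | sigmaLE X s ⊔ sigmaGE X u] =ᵐ[μ]
        fun ω => a s t u * X s ω + b s t u * X u ω)
    (hindep : ∀ t : ℝ, 0 < t → LinIndep123 μ (X t))
    (A B C D α β : ℝ → ℝ → ℝ → ℝ)
    (hQV : ∀ s t u : ℝ, 0 ≤ s → s < t → t < u →
      μ[fun ω => (X t ω) ^ 2 | sigmaLE X s ⊔ sigmaGE X u] =ᵐ[μ]
        fun ω => A s t u * (X s ω) ^ 2 + B s t u * X s ω * X u ω +
          C s t u * (X u ω) ^ 2 + D s t u + α s t u * X s ω + β s t u * X u ω)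
    (hD : ∀ s t u : ℝ, 0 ≤ s → s < t → t < u → D s t u ≠ 0) :
    (∀ s t u : ℝ, 0 ≤ s → s < t → t < u → b s t u - C s t u ≠ 0) ∧
    (∀ t u : ℝ, 0 ≤ t → t < u → ∃ e f g : ℝ,
      μ[fun ω => (X u ω) ^ 2 | sigmaLE X t] =ᵐ[μ]
        fun ω => e * (X t ω) ^ 2 + f * X t ω + g) ∧
    (∀ s t u : ℝ, 0 ≤ s → s < t → t < u →
      μ[fun ω => (X u ω) ^ 2 - u | sigmaLE X s] =ᵐ[μ]
        fun ω =>
          (1 + (A s t u + B s t u + C s t u - 1) / (b s t u - C s t u)) *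
              ((X s ω) ^ 2 - s) +
            (α s t u + β s t u) / (b s t u - C s t u) * X s ω) := by
  have hX : IsCovLRProcess μ X a b := ⟨hmeas, hL2, hX0, hcov, hLR⟩
  have key := fun s t u hs hst htu =>
    hX.sub_mul_condExp_sq_ae_eq (hQV s t u hs hst htu) hs hst htu
  have hbC : ∀ s t u : ℝ, 0 ≤ s → s < t → t < u → b s t u - C s t u ≠ 0 := by
    intro s t u hs hst htu hbC₀
    refine hD s t u hs hst htu (eq_zero_of_quadratic_ae_eq_zero hX0 hindep hs
      (c₁ := α s t u + β s t u) (c₂ := A s t u + B s t u - a s t u) ?_)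
    filter_upwards [key s t u hs hst htu] with ω h
    rw [hbC₀, zero_mul] at h
    linear_combination -h
  refine ⟨hbC, fun t u ht htu => ?_, fun s t u hs hst htu =>
    hX.condExp_sq_sub_sigmaLE (hQV s t u hs hst htu) hs hst htu (hbC s t u hs hst htu)⟩
  obtain ⟨v, htv, hvu⟩ := exists_between htu
  refine ⟨(A t v u + B t v u - a t v u) / (b t v u - C t v u),
    (α t v u + β t v u) / (b t v u - C t v u), D t v u / (b t v u - C t v u),
    (key t v u ht htv hvu).mono fun ω h => ?_⟩
  have := hbC t v u ht htv hvu
  field_simp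
  linear_combination h

theorem stmt2 {Ω : Type*} [MeasurableSpace Ω] (μ : Measure Ω) [IsProbabilityMeasure μ]
    (X : ℝ → Ω → ℝ) (hmeas : ∀ t, Measurable (X t))
    (hL2 : ∀ t, 0 ≤ t → MemLp (X t) 2 μ)
    (hX0 : ∀ ω, X 0 ω = 0)
    (hmean : ∀ t : ℝ, 0 ≤ t → ∫ ω, X t ω ∂μ = 0)
    (hcov : ∀ s t : ℝ, 0 ≤ s → 0 ≤ t → ∫ ω, X t ω * X s ω ∂μ = min t s)
    (a b : ℝ → ℝ → ℝ → ℝ)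
    (hLR : ∀ s t u : ℝ, 0 ≤ s → s < t → t < u →
      μ[X t | sigmaLE X s ⊔ sigmaGE X u] =ᵐ[μ]
        fun ω => a s t u * X s ω + b s t u * X u ω)
    (hindep : ∀ t : ℝ, 0 < t → LinIndep123 μ (X t))
    (A B C D α β : ℝ → ℝ → ℝ → ℝ)
    (hQV : ∀ s t u : ℝ, 0 ≤ s → s < t → t < u →
      μ[fun ω => (X t ω) ^ 2 | sigmaLE X s ⊔ sigmaGE X u] =ᵐ[μ]
        fun ω => A s t u * (X s ω) ^ 2 + B s t u * X s ω * X u ω +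
          C s t u * (X u ω) ^ 2 + D s t u + α s t u * X s ω + β s t u * X u ω)
    (hD : ∀ s t u : ℝ, 0 ≤ s → s < t → t < u → D s t u ≠ 0) :
    (∀ s t u : ℝ, 0 ≤ s → s < t → t < u → b s t u - C s t u ≠ 0) ∧
    (∀ t u : ℝ, 0 ≤ t → t < u → ∃ e f g : ℝ,
      μ[fun ω => (X u ω) ^ 2 | sigmaLE X t] =ᵐ[μ]
        fun ω => e * (X t ω) ^ 2 + f * X t ω + g) ∧
    (∀ s t u : ℝ, 0 ≤ s → s < t → t < u →
      μ[fun ω => (X u ω) ^ 2 - u | sigmaLE X s] =ᵐ[μ]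
        fun ω =>
          (1 + (A s t u + B s t u + C s t u - 1) / (b s t u - C s t u)) *
              ((X s ω) ^ 2 - s) +
            (α s t u + β s t u) / (b s t u - C s t u) * X s ω) :=
  stmt2_general μ X hmeas hL2 hX0 hcov a b hLR hindep A B C D α β hQV hD
end
end

section
/- (Proposition 3.3, martingale polynomials) Fix real parameters θ ∈ ℝ, τ ≥ 0, −1 ≤ q ≤ 1, reals 0 ≤ s < t and x ∈ ℝ. Suppose P is a Borel probability measure on ℝ with finite moments of all orders such that ∫ Q_n(y|x,s,t) P(dy) = 0 for all n ≥ 1. Then ∫ p_n(y,t) P(dy) = p_n(x,s) for all n ≥ 0, where p_n(x,t) = Q_n(x|0,0,t). -/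
noncomputable section

/-- The q-integer `[n]_q = 1 + q + ⋯ + q^(n-1)`, with `[0]_q = 0`. -/
def qInt (q : ℝ) (n : ℕ) : ℝ := ∑ i ∈ Finset.range n, q ^ i

/-- The q-factorial `[n]_q! = [1]_q [2]_q ⋯ [n]_q`, with `[0]_q! = 1`. -/
def qFact (q : ℝ) : ℕ → ℝ
  | 0 => 1
  | n + 1 => qFact q n * qInt q (n + 1)

/-- The q-binomial coefficient `[n choose k]_q = [n]_q! / ([k]_q! [n-k]_q!)`. -/
def qBinom (q : ℝ) (n k : ℕ) : ℝ := qFact q n / (qFact q k * qFact q (n - k))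

/-- The polynomials `Q_n(y | x, s, t)` defined by `Q₀ = 1`, `Q₁(y|x) = y - x` and, for `n ≥ 1`,
`y Q_n(y|x) = Q_{n+1}(y|x) + (θ[n]_q + x qⁿ) Q_n(y|x) + (t - s q^(n-1) + τ[n-1]_q)[n]_q Q_{n-1}(y|x)`. -/
def Qpoly (θ τ q : ℝ) : ℕ → ℝ → ℝ → ℝ → ℝ → ℝ
  | 0, _, _, _, _ => 1
  | 1, y, x, _, _ => y - x
  | n + 2, y, x, s, t =>
      (y - (θ * qInt q (n + 1) + x * q ^ (n + 1))) * Qpoly θ τ q (n + 1) y x s t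
        - (t - s * q ^ n + τ * qInt q n) * qInt q (n + 1) * Qpoly θ τ q n y x s t


open MeasureTheory

/-! ### Auxiliary material for the proof -/

/-- Gaussian binomial coefficients defined by the q-Pascal recurrence. -/
def cC (q : ℝ) : ℕ → ℕ → ℝ
  | _, 0 => 1
  | 0, _ + 1 => 0
  | n + 1, k + 1 => cC q n k + q ^ (k + 1) * cC q n (k + 1)

lemma qInt_zero (q : ℝ) : qInt q 0 = 0 := by simp [qInt]

lemma qInt_one (q : ℝ) : qInt q 1 = 1 := by simp [qInt]

lemma qInt_split (q : ℝ) {k m : ℕ} (h : k ≤ m) :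
    qInt q m = qInt q k + q ^ k * qInt q (m - k) := by
  obtain ⟨d, rfl⟩ := Nat.exists_eq_add_of_le h
  simp only [qInt, Nat.add_sub_cancel_left, Finset.sum_range_add, pow_add]
  rw [Finset.mul_sum]

lemma cC_zero_right (q : ℝ) (n : ℕ) : cC q n 0 = 1 := by cases n <;> rfl

lemma cC_eq_zero (q : ℝ) : ∀ {n k : ℕ}, n < k → cC q n k = 0 := by
  intro n
  induction n with
  | zero => intro k hk; match k, hk with | k+1, _ => rfl
  | succ n ih =>
    intro k hk
    match k, hk with
    | k+1, hk =>
      have h1 : n < k := Nat.lt_of_succ_lt_succ hk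
      rw [show cC q (n+1) (k+1) = cC q n k + q ^ (k+1) * cC q n (k+1) from rfl,
        ih h1, ih (Nat.lt_succ_of_lt h1)]
      ring

lemma cC_one (q : ℝ) (n : ℕ) : cC q n 1 = qInt q n := by
  induction n with
  | zero => simp [cC, qInt]
  | succ n ih =>
    rw [show cC q (n+1) 1 = cC q n 0 + q ^ 1 * cC q n 1 from rfl, cC_zero_right, ih]
    simp only [qInt, Finset.sum_range_succ', pow_zero, pow_succ, Finset.mul_sum, pow_one]
    rw [add_comm]
    congr 1
    exact Finset.sum_congr rfl fun i _ => by ring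

lemma cC_pascal (q : ℝ) (n k : ℕ) :
    cC q (n+1) (k+1) = cC q n k + q ^ (k+1) * cC q n (k+1) := rfl

lemma cC_L (q : ℝ) : ∀ n k : ℕ,
    cC q (n+1) (k+1) * qInt q (k+1) = qInt q (n+1) * cC q n k ∧
    cC q (n+1) k * qInt q (n+1-k) = qInt q (n+1) * cC q n k := by
  intro n
  induction n with
  | zero =>
    intro k
    have h0 : ∀ j : ℕ, cC q 0 (j+1) = 0 := fun j => rfl
    constructor
    · match k with
      | 0 => simp [cC_pascal, cC_zero_right, h0, qInt]
      | k+1 => simp [cC_pascal, h0]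
    · match k with
      | 0 => simp [cC_zero_right]
      | 1 => rw [cC_one]; simp [qInt_zero, qInt, h0]
      | k+2 => simp [cC_pascal, h0]
  | succ n ih =>
    intro k
    have hL1 := fun k => (ih k).1
    have hL2 := fun k => (ih k).2
    constructor
    · by_cases hk : k ≤ n + 1
      · have hsub : n + 1 + 1 - (k+1) = n + 1 - k := by omega
        rw [cC_pascal, qInt_split q (show k+1 ≤ n+1+1 by omega), hsub]
        linear_combination (q ^ (k+1)) * hL1 k - (q ^ (k+1)) * hL2 k
      · push_neg at hk
        rw [cC_eq_zero q (by omega : n + 1 < k), cC_eq_zero q (by omega : n + 1 + 1 < k + 1)]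
        ring
    · match k with
      | 0 => simp [cC_zero_right]
      | k+1 =>
        by_cases hk : k + 1 ≤ n + 2
        · have hsub : n + 1 + 1 - (k+1) = n + 1 - k := by omega
          rw [cC_pascal, hsub, qInt_split q (show k+1 ≤ n+1+1 by omega), hsub]
          linear_combination hL2 k - hL1 k
        · push_neg at hk
          rw [cC_eq_zero q (by omega : n + 1 < k + 1), cC_eq_zero q (by omega : n + 1 + 1 < k + 1)]
          ring

lemma cC_L1 (q : ℝ) (n k : ℕ) :
    cC q (n+1) (k+1) * qInt q (k+1) = qInt q (n+1) * cC q n k := (cC_L q n k).1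

lemma cC_L2 (q : ℝ) (n k : ℕ) :
    cC q (n+1) k * qInt q (n+1-k) = qInt q (n+1) * cC q n k := (cC_L q n k).2

/-- Uniform three-term recurrence (with ℕ-subtraction conventions). -/
lemma Qpoly_rec (θ τ q : ℝ) (k : ℕ) (y x s t : ℝ) :
    y * Qpoly θ τ q k y x s t =
      Qpoly θ τ q (k+1) y x s t + (θ * qInt q k + x * q ^ k) * Qpoly θ τ q k y x s t
        + (t - s * q ^ (k-1) + τ * qInt q (k-1)) * qInt q k * Qpoly θ τ q (k-1) y x s t := by
  match k with
  | 0 => simp [Qpoly, qInt_zero]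
  | m+1 =>
    show _ = ((y - (θ * qInt q (m + 1) + x * q ^ (m + 1))) * Qpoly θ τ q (m + 1) y x s t
        - (t - s * q ^ m + τ * qInt q m) * qInt q (m + 1) * Qpoly θ τ q m y x s t) + _ + _
    simp only [Nat.add_sub_cancel]
    ring
lemma sum_step (θ τ q x s t y : ℝ) (A Pp : ℕ → ℝ)
    (hArec : ∀ k : ℕ, y * A k = A (k+1) + (θ * qInt q k + x * q ^ k) * A k
      + (t - s * q ^ (k-1) + τ * qInt q (k-1)) * qInt q k * A (k-1))
    (hPrec : ∀ m : ℕ, x * Pp m = Pp (m+1) + θ * qInt q m * Pp m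
      + (s + τ * qInt q (m-1)) * qInt q m * Pp (m-1))
    (n : ℕ) :
    (y - θ * qInt q (n+1)) * (∑ k ∈ Finset.range (n+2), cC q (n+1) k * A k * Pp (n+1-k))
      - (t + τ * qInt q n) * qInt q (n+1)
          * (∑ k ∈ Finset.range (n+1), cC q n k * A k * Pp (n-k))
    = ∑ k ∈ Finset.range (n+3), cC q (n+2) k * A k * Pp (n+2-k) := by
  have hpad : ∑ k ∈ Finset.range (n+2), cC q n k * A k * Pp (n-k)
      = ∑ k ∈ Finset.range (n+1), cC q n k * A k * Pp (n-k) := by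
    rw [Finset.sum_range_succ, cC_eq_zero q (show n < n+1 by omega)]; ring
  rw [← hpad]
  set δ : ℝ := (t + τ * qInt q n) * qInt q (n+1) with hδ
  set g : ℕ → ℝ := fun k => (t - s * q ^ (k-1) + τ * qInt q (k-1)) * qInt q k with hg
  set c1 : ℕ → ℝ := fun k => cC q (n+1) k * Pp (n+1-k) with hc1
  set c2 : ℕ → ℝ := fun k =>
    c1 k * (θ * qInt q k + x * q ^ k - θ * qInt q (n+1)) - δ * (cC q n k * Pp (n-k)) with hc2
  set cR : ℕ → ℝ := fun k => cC q (n+2) k * Pp (n+2-k) with hcR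
  -- the per-index coefficient identity for 0 ≤ k ≤ n
  have key : ∀ k : ℕ, k ≤ n → c1 k + c2 (k+1) + c1 (k+2) * g (k+2) = cR (k+1) := by
    intro k hk
    simp only [hc1, hc2, hg, hcR, hδ]
    set m : ℕ := n - k with hm
    have e1 : n + 1 - (k+1) = m := by omega
    have e2 : n - (k+1) = m - 1 := by omega
    have e3 : n + 1 - (k+2) = m - 1 := by omega
    have e4 : n + 2 - (k+1) = m + 1 := by omega
    have e5 : n + 1 - k = m + 1 := by omega
    rw [e1, e2, e3, e4, e5, cC_pascal q (n+1) k]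
    have Hp := hPrec m
    have Hs : qInt q (n+1) = qInt q (k+1) + q ^ (k+1) * qInt q m := by
      have := qInt_split q (show k+1 ≤ n+1 by omega)
      rwa [show n + 1 - (k+1) = m by omega] at this
    have E1 : cC q (n+1) (k+2) * qInt q (k+2) = qInt q (n+1) * cC q n (k+1) := cC_L1 q n (k+1)
    have E2 : cC q (n+1) (k+1) * qInt q m = qInt q (n+1) * cC q n (k+1) := by
      have := cC_L2 q n (k+1)
      rwa [show n + 1 - (k+1) = m by omega] at this
    have E3 : cC q n (k+1) * (qInt q (k+1) + q ^ (k+1) * qInt q (m-1) - qInt q n) = 0 := by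
      by_cases h : k + 1 ≤ n
      · have := qInt_split q h
        rw [show n - (k+1) = m - 1 by omega] at this
        rw [this]; ring
      · rw [cC_eq_zero q (show n < k+1 by omega)]; ring
    have e6 : k + 2 - 1 = k + 1 := by omega
    rw [e6]
    linear_combination q ^ (k+1) * cC q (n+1) (k+1) * Hp
      - θ * cC q (n+1) (k+1) * Pp m * Hs
      + (t - s * q ^ (k+1) + τ * qInt q (k+1)) * Pp (m-1) * E1
      + q ^ (k+1) * (s + τ * qInt q (m-1)) * Pp (m-1) * E2
      + τ * qInt q (n+1) * Pp (m-1) * E3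
  -- the edge case k = n+1
  have hedge : c1 (n+1) + c2 (n+2) + c1 (n+3) * g (n+3) = cR (n+2) := by
    simp only [hc1, hc2, hg, hcR, hδ]
    rw [cC_eq_zero q (show n+1 < n+2 by omega), cC_eq_zero q (show n < n+2 by omega),
      cC_eq_zero q (show n+1 < n+3 by omega), cC_pascal q (n+1) (n+1),
      cC_eq_zero q (show n+1 < n+2 by omega)]
    rw [show n+1 - (n+1) = 0 by omega, show n+2 - (n+2) = 0 by omega]
    ring
  -- the constant (k = 0) identity
  have hconst : c2 0 + c1 1 * g 1 = cR 0 := by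
    simp only [hc1, hc2, hg, hcR, hδ]
    rw [cC_zero_right, cC_zero_right, cC_zero_right, cC_one, qInt_zero, qInt_one]
    have hp := hPrec (n+1)
    simp only [Nat.add_sub_cancel, Nat.sub_zero] at hp ⊢
    linear_combination hp
  -- zero values
  have hc2top : c2 (n+2) = 0 := by
    simp only [hc2, hc1]
    rw [cC_eq_zero q (show n+1 < n+2 by omega), cC_eq_zero q (show n < n+2 by omega)]
    ring
  have hc1top1 : c1 (n+2) = 0 := by
    simp only [hc1]; rw [cC_eq_zero q (show n+1 < n+2 by omega)]; ring
  have hc1top2 : c1 (n+3) = 0 := by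
    simp only [hc1]; rw [cC_eq_zero q (show n+1 < n+3 by omega)]; ring
  have hg0 : g 0 = 0 := by simp only [hg]; rw [qInt_zero]; ring
  calc
    (y - θ * qInt q (n+1)) * (∑ k ∈ Finset.range (n+2), cC q (n+1) k * A k * Pp (n+1-k))
        - δ * (∑ k ∈ Finset.range (n+2), cC q n k * A k * Pp (n-k))
      = ∑ k ∈ Finset.range (n+2),
          ((y - θ * qInt q (n+1)) * (cC q (n+1) k * A k * Pp (n+1-k))
            - δ * (cC q n k * A k * Pp (n-k))) := by
        rw [Finset.sum_sub_distrib, ← Finset.mul_sum, ← Finset.mul_sum]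
    _ = ∑ k ∈ Finset.range (n+2),
          (c1 k * A (k+1) + c2 k * A k + c1 k * g k * A (k-1)) :=
        Finset.sum_congr rfl fun k _ => by
          simp only [hc1, hc2, hg]
          linear_combination cC q (n+1) k * Pp (n+1-k) * hArec k
    _ = (∑ k ∈ Finset.range (n+2), c1 k * A (k+1))
        + ((∑ k ∈ Finset.range (n+2), c2 k * A k)
          + (∑ k ∈ Finset.range (n+2), c1 k * g k * A (k-1))) := by
        rw [← Finset.sum_add_distrib, ← Finset.sum_add_distrib]
        exact Finset.sum_congr rfl fun k _ => by ring
    _ = (∑ k ∈ Finset.range (n+2), c1 k * A (k+1))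
        + (((∑ k ∈ Finset.range (n+2), c2 (k+1) * A (k+1)) + c2 0 * A 0)
          + ((∑ k ∈ Finset.range (n+2), c1 (k+2) * g (k+2) * A (k+1)) + c1 1 * g 1 * A 0)) := by
        congr 1
        congr 1
        · rw [Finset.sum_range_succ' (fun k => c2 k * A k) (n+1)]
          congr 1
          rw [Finset.sum_range_succ (fun k => c2 (k+1) * A (k+1)) (n+1)]
          rw [show n+1+1 = n+2 by omega, hc2top]
          ring
        · rw [Finset.sum_range_succ' (fun k => c1 k * g k * A (k-1)) (n+1)]
          rw [show c1 0 * g 0 * A (0-1) = 0 by rw [hg0]; ring, add_zero]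
          rw [Finset.sum_range_succ' (fun k => c1 (k+1) * g (k+1) * A (k+1-1)) n]
          simp only [Nat.add_sub_cancel]
          congr 1
          · rw [Finset.sum_range_succ (fun k => c1 (k+2) * g (k+2) * A (k+1)) (n+1),
              Finset.sum_range_succ (fun k => c1 (k+2) * g (k+2) * A (k+1)) n]
            rw [show n+2 = n+1+1 by omega] at hc1top1
            rw [show n+3 = n+1+2 by omega] at hc1top2
            rw [show n+1+1+1 = n+1+2 by omega]
            rw [hc1top1, hc1top2]
            ring
    _ = (∑ k ∈ Finset.range (n+2), cR (k+1) * A (k+1)) + cR 0 * A 0 := by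
        have hsum : ∀ k ∈ Finset.range (n+2),
            c1 k * A (k+1) + (c2 (k+1) * A (k+1) + c1 (k+2) * g (k+2) * A (k+1))
            = cR (k+1) * A (k+1) := by
          intro k hk
          rcases Nat.lt_or_ge k (n+1) with h | h
          · linear_combination A (k+1) * key k (by omega)
          · have hk2 : k = n + 1 := by
              have := Finset.mem_range.mp hk; omega
            subst hk2
            rw [show n+1+1 = n+2 by omega, show n+1+2 = n+3 by omega]
            linear_combination A (n+2) * hedge
        calc
          (∑ k ∈ Finset.range (n+2), c1 k * A (k+1))
              + (((∑ k ∈ Finset.range (n+2), c2 (k+1) * A (k+1)) + c2 0 * A 0)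
                + ((∑ k ∈ Finset.range (n+2), c1 (k+2) * g (k+2) * A (k+1)) + c1 1 * g 1 * A 0))
            = (∑ k ∈ Finset.range (n+2),
                (c1 k * A (k+1) + (c2 (k+1) * A (k+1) + c1 (k+2) * g (k+2) * A (k+1))))
              + (c2 0 + c1 1 * g 1) * A 0 := by
              rw [Finset.sum_add_distrib, Finset.sum_add_distrib]
              ring
          _ = (∑ k ∈ Finset.range (n+2), cR (k+1) * A (k+1)) + cR 0 * A 0 := by
              rw [Finset.sum_congr rfl hsum, ← hconst]
    _ = ∑ k ∈ Finset.range (n+3), cC q (n+2) k * A k * Pp (n+2-k) := by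
        rw [Finset.sum_range_succ' (fun k => cC q (n+2) k * A k * Pp (n+2-k)) (n+2)]
        simp only [hcR]
        congr 1
        · exact Finset.sum_congr rfl fun k _ => by ring
        · ring

/-- Key expansion: `p_n(y,t) = Σ_k cC(n,k) Q_k(y|x,s,t) p_{n-k}(x,s)`. -/
lemma Qpoly_key (θ τ q x s t : ℝ) : ∀ n : ℕ, ∀ y : ℝ,
    Qpoly θ τ q n y 0 0 t =
      ∑ k ∈ Finset.range (n+1),
        cC q n k * Qpoly θ τ q k y x s t * Qpoly θ τ q (n-k) x 0 0 s := by
  have main : ∀ n : ℕ, (∀ y : ℝ,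
      Qpoly θ τ q n y 0 0 t = ∑ k ∈ Finset.range (n+1),
        cC q n k * Qpoly θ τ q k y x s t * Qpoly θ τ q (n-k) x 0 0 s) ∧ (∀ y : ℝ,
      Qpoly θ τ q (n+1) y 0 0 t = ∑ k ∈ Finset.range (n+2),
        cC q (n+1) k * Qpoly θ τ q k y x s t * Qpoly θ τ q (n+1-k) x 0 0 s) := by
    intro n
    induction n with
    | zero =>
      constructor
      · intro y; simp [Qpoly, cC_zero_right]
      · intro y
        simp [Finset.sum_range_succ, Qpoly, cC_zero_right, cC_one, qInt_zero, qInt]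
    | succ n ih =>
      obtain ⟨ih1, ih2⟩ := ih
      refine ⟨ih2, fun y => ?_⟩
      have hQ : Qpoly θ τ q (n+2) y 0 0 t
          = (y - θ * qInt q (n+1)) * Qpoly θ τ q (n+1) y 0 0 t
            - (t + τ * qInt q n) * qInt q (n+1) * Qpoly θ τ q n y 0 0 t := by
        show ((y - (θ * qInt q (n + 1) + 0 * q ^ (n + 1))) * Qpoly θ τ q (n + 1) y 0 0 t
          - (t - 0 * q ^ n + τ * qInt q n) * qInt q (n + 1) * Qpoly θ τ q n y 0 0 t) = _
        ring
      rw [hQ, ih1 y, ih2 y]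
      exact sum_step θ τ q x s t y (fun k => Qpoly θ τ q k y x s t)
        (fun m => Qpoly θ τ q m x 0 0 s)
        (fun k => Qpoly_rec θ τ q k y x s t)
        (fun m => by
          have h := Qpoly_rec θ τ q m x 0 0 s
          linear_combination h) n
  exact fun n => (main n).1

/-- Each `Qpoly` is a polynomial function of its first real argument. -/
lemma Qpoly_isPoly (θ τ q x s t : ℝ) :
    ∀ n : ℕ, ∃ p : Polynomial ℝ, ∀ y : ℝ, Qpoly θ τ q n y x s t = Polynomial.eval y p := by
  have main : ∀ n : ℕ,
      (∃ p : Polynomial ℝ, ∀ y : ℝ, Qpoly θ τ q n y x s t = Polynomial.eval y p) ∧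
      (∃ p : Polynomial ℝ, ∀ y : ℝ, Qpoly θ τ q (n+1) y x s t = Polynomial.eval y p) := by
    intro n
    induction n with
    | zero =>
      exact ⟨⟨1, fun y => by simp [Qpoly]⟩, ⟨Polynomial.X - Polynomial.C x, fun y => by
        simp [Qpoly]⟩⟩
    | succ n ih =>
      obtain ⟨⟨p1, hp1⟩, ⟨p2, hp2⟩⟩ := ih
      refine ⟨⟨p2, hp2⟩, ⟨(Polynomial.X - Polynomial.C (θ * qInt q (n+1) + x * q ^ (n+1))) * p2
        - Polynomial.C ((t - s * q ^ n + τ * qInt q n) * qInt q (n+1)) * p1, fun y => ?_⟩⟩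
      show (y - (θ * qInt q (n + 1) + x * q ^ (n + 1))) * Qpoly θ τ q (n + 1) y x s t
        - (t - s * q ^ n + τ * qInt q n) * qInt q (n + 1) * Qpoly θ τ q n y x s t = _
      rw [hp1, hp2]
      simp
  exact fun n => (main n).1

theorem stmt13 (θ τ q : ℝ) (hq1 : -1 ≤ q) (hq2 : q ≤ 1) (hτ : 0 ≤ τ)
    (s t x : ℝ) (hs : 0 ≤ s) (hst : s < t)
    (P : Measure ℝ) [IsProbabilityMeasure P]
    (hmom : ∀ a : ℕ, Integrable (fun y => |y| ^ a) P)
    (horth : ∀ n : ℕ, 1 ≤ n → ∫ y, Qpoly θ τ q n y x s t ∂P = 0) :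
    ∀ n : ℕ, ∫ y, Qpoly θ τ q n y 0 0 t ∂P = Qpoly θ τ q n x 0 0 s := by
  -- integrability of monomials
  have hmono : ∀ i : ℕ, Integrable (fun y : ℝ => y ^ i) P := by
    intro i
    refine (hmom i).mono' (continuous_pow i).aestronglyMeasurable ?_
    filter_upwards with y
    rw [Real.norm_eq_abs, abs_pow]
  -- integrability of polynomial functions
  have hpolyint : ∀ p : Polynomial ℝ, Integrable (fun y : ℝ => Polynomial.eval y p) P := by
    intro p
    have : (fun y : ℝ => Polynomial.eval y p)
        = fun y : ℝ => ∑ i ∈ Finset.range (p.natDegree + 1), p.coeff i * y ^ i := by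
      funext y
      rw [Polynomial.eval_eq_sum_range]
    rw [this]
    exact integrable_finset_sum _ fun i _ => (hmono i).const_mul _
  have hint : ∀ (n : ℕ) (x' s' t' : ℝ), Integrable (fun y => Qpoly θ τ q n y x' s' t') P := by
    intro n x' s' t'
    obtain ⟨p, hp⟩ := Qpoly_isPoly θ τ q x' s' t' n
    have : (fun y => Qpoly θ τ q n y x' s' t') = fun y => Polynomial.eval y p := funext hp
    rw [this]
    exact hpolyint p
  intro n
  have hkey := Qpoly_key θ τ q x s t n
  calc ∫ y, Qpoly θ τ q n y 0 0 t ∂P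
      = ∫ y, ∑ k ∈ Finset.range (n+1),
          cC q n k * Qpoly θ τ q k y x s t * Qpoly θ τ q (n-k) x 0 0 s ∂P := by
        exact integral_congr_ae (Filter.Eventually.of_forall fun y => hkey y)
    _ = ∑ k ∈ Finset.range (n+1),
          ∫ y, cC q n k * Qpoly θ τ q k y x s t * Qpoly θ τ q (n-k) x 0 0 s ∂P := by
        exact integral_finset_sum _ fun k _ => ((hint k x s t).const_mul _).mul_const _
    _ = ∑ k ∈ Finset.range (n+1),
          cC q n k * (∫ y, Qpoly θ τ q k y x s t ∂P) * Qpoly θ τ q (n-k) x 0 0 s := by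
        refine Finset.sum_congr rfl fun k _ => ?_
        rw [integral_mul_const, integral_const_mul]
    _ = Qpoly θ τ q n x 0 0 s := by
        rw [Finset.sum_eq_single 0]
        · rw [cC_zero_right]
          simp [Qpoly]
        · intro k hk hk0
          rw [horth k (Nat.one_le_iff_ne_zero.mpr hk0)]
          ring
        · intro h
          exact absurd (Finset.mem_range.mpr (Nat.succ_pos n)) h
end
end
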